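/- Let β be a complex number with |β| > 1 and A ⊂ ℤ[β] a finite alphabet with 0 ∈ A. If the set Fin_β(A) of numbers with finite (β,A)-representations contains 1 and is closed under addition, then β is algebraic over ℚ. -/

import Mathlib

noncomputable section

/-- `ℤ[β]`: the smallest subring of `ℂ` containing `β` (and hence `ℤ`). -/
def Zring (β : ℂ) : Subring ℂ := Subring.closure {β}

/-- `x` has a finite `(β, A)`-representation `x = ∑_{j=-m}^{n} a_j β^j` with digits in `A`. -/
def FinRep (β : ℂ) (A : Set ℂ) (x : ℂ) : Prop :=
  ∃ (m n : ℕ) (a : ℤ → ℂ), (∀ j, a j ∈ A) ∧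
    x = ∑ j ∈ Finset.Icc (-(m : ℤ)) (n : ℤ), a j * β ^ j

/-!
If `β` were transcendental, evaluation at `β` would identify `ℤ[β]` with `ℤ[X]`, so the finitely
many digits become integer polynomials of degree at most `D` with coefficients bounded by `H`.
Multiplying a representation `N = ∑ a_j β^j` by `β^m` turns it into a polynomial identity, and
comparing coefficients of `X^m` shows that only the digits at positions `-D, …, 0` contribute
to `N`, so `N ≤ (D + 1) H`. But `1` and closure under addition make every positive integer
representable.
-/

open Polynomial

theorem exists_aeval_eq_of_mem_Zring {β x : ℂ} (hx : x ∈ Zring β) :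
    ∃ q : ℤ[X], aeval β q = x := by
  have hx' : x ∈ Algebra.adjoin ℤ {β} := by
    rw [Algebra.adjoin_int]
    exact hx
  rwa [Algebra.adjoin_singleton_eq_range_aeval] at hx'

theorem Set.Finite.exists_natDegree_le_and_natAbs_coeff_le {s : Set ℤ[X]} (hs : s.Finite) :
    ∃ D H : ℕ, ∀ q ∈ s, q.natDegree ≤ D ∧ ∀ k, (q.coeff k).natAbs ≤ H := by
  obtain ⟨D, hD⟩ := (hs.image natDegree).bddAbove
  obtain ⟨H, hH⟩ := (hs.biUnion fun q _ => (finite_range_coeff q).image Int.natAbs).bddAbove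
  exact ⟨D, H, fun q hq => ⟨hD (Set.mem_image_of_mem _ hq), fun k =>
    hH (Set.mem_biUnion hq (Set.mem_image_of_mem _ (Set.mem_range_self k)))⟩⟩

theorem Polynomial.natAbs_coeff_sum_mul_X_pow_le {s : Finset ℕ} {q : ℕ → ℤ[X]} {D H : ℕ}
    (hdeg : ∀ i ∈ s, (q i).natDegree ≤ D) (hcoeff : ∀ i ∈ s, ∀ k, ((q i).coeff k).natAbs ≤ H)
    (m : ℕ) : ((∑ i ∈ s, q i * X ^ i).coeff m).natAbs ≤ (D + 1) * H := by
  have hvanish : ∀ i ∈ s, i ∉ s ∩ Finset.Icc (m - D) m → (q i * X ^ i).coeff m = 0 := by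
    intro i hi hi'
    rw [coeff_mul_X_pow']
    split_ifs
    · have := hdeg i hi
      simp only [Finset.mem_inter, Finset.mem_Icc, hi, true_and, not_and, not_le] at hi'
      exact coeff_eq_zero_of_natDegree_lt (by omega)
    · rfl
  rw [finsetSum_coeff, ← Finset.sum_subset Finset.inter_subset_left hvanish]
  calc ((∑ i ∈ s ∩ Finset.Icc (m - D) m, (q i * X ^ i).coeff m).natAbs)
      ≤ ∑ i ∈ s ∩ Finset.Icc (m - D) m, ((q i * X ^ i).coeff m).natAbs := Int.natAbs_sum_le _ _
    _ ≤ (s ∩ Finset.Icc (m - D) m).card * H := by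
      refine Finset.sum_le_card_nsmul _ _ _ fun i hi => ?_
      rw [coeff_mul_X_pow']
      split_ifs
      · exact hcoeff i (Finset.mem_inter.mp hi).1 _
      · simp
    _ ≤ (D + 1) * H := by
      gcongr
      calc (s ∩ Finset.Icc (m - D) m).card ≤ (Finset.Icc (m - D) m).card :=
            Finset.card_le_card Finset.inter_subset_right
        _ ≤ D + 1 := by rw [Nat.card_Icc]; omega

namespace FinRep

variable {β : ℂ} {A : Set ℂ}

theorem exists_mul_pow_eq_sum (hβ : β ≠ 0) {x : ℂ} (hx : FinRep β A x) :
    ∃ (m : ℕ) (s : Finset ℕ) (d : ℕ → ℂ), (∀ i, d i ∈ A) ∧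
      x * β ^ m = ∑ i ∈ s, d i * β ^ i := by
  obtain ⟨m, n, a, ha, rfl⟩ := hx
  refine ⟨m, Finset.range (m + n + 1), fun i => a (i - m), fun i => ha _, ?_⟩
  rw [Finset.sum_mul]
  refine Finset.sum_nbij' (fun j => (j + m).toNat) (fun i => (i : ℤ) - m) ?_ ?_ ?_ ?_ ?_
  · intro j hj
    simp only [Finset.mem_Icc, Finset.mem_range] at hj ⊢
    omega
  · intro i hi
    simp only [Finset.mem_Icc, Finset.mem_range] at hi ⊢
    omega
  · intro j hj
    simp only [Finset.mem_Icc] at hj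
    omega
  · intro i _
    simp
  · intro j hj
    rw [Finset.mem_Icc] at hj
    have hjm : ((j + m).toNat : ℤ) = j + m := Int.toNat_of_nonneg (by omega)
    show a j * β ^ j * β ^ m = a (((j + m).toNat : ℤ) - m) * β ^ (j + m).toNat
    rw [hjm, add_sub_cancel_right, mul_assoc, ← zpow_natCast β (j + m).toNat, hjm,
      zpow_add₀ hβ, zpow_natCast]

theorem natCast_add_one (hone : FinRep β A 1)
    (hadd : ∀ x y : ℂ, FinRep β A x → FinRep β A y → FinRep β A (x + y)) (n : ℕ) :
    FinRep β A (n + 1) := by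
  induction n with
  | zero => simpa using hone
  | succ n ih => exact_mod_cast hadd _ _ ih hone

theorem exists_natCast_bound (hβ : Transcendental ℤ β) (hAfin : A.Finite)
    (hA : A ⊆ (Zring β : Set ℂ)) : ∃ B : ℕ, ∀ N : ℕ, FinRep β A N → N ≤ B := by
  have hβ0 : β ≠ 0 := by
    rintro rfl
    exact hβ isAlgebraic_zero
  choose! p hp using fun a (ha : a ∈ A) => exists_aeval_eq_of_mem_Zring (hA ha)
  obtain ⟨D, H, hDH⟩ := (hAfin.image p).exists_natDegree_le_and_natAbs_coeff_le
  refine ⟨(D + 1) * H, fun N hN => ?_⟩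
  obtain ⟨m, s, d, hd, hsum⟩ := hN.exists_mul_pow_eq_sum hβ0
  have hdigit : ∀ i ∈ s, p (d i) ∈ p '' A := fun i _ => Set.mem_image_of_mem p (hd i)
  have hpoly : ∑ i ∈ s, p (d i) * X ^ i = C (N : ℤ) * X ^ m :=
    transcendental_iff_injective.mp hβ (by simp [hp _ (hd _), hsum])
  have hbound := natAbs_coeff_sum_mul_X_pow_le (fun i hi => (hDH _ (hdigit i hi)).1)
    (fun i hi => (hDH _ (hdigit i hi)).2) m
  rwa [hpoly, coeff_C_mul_X_pow, if_pos rfl, Int.natAbs_natCast] at hbound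

end FinRep

theorem stmt1_general (β : ℂ) (A : Set ℂ) (hAfin : A.Finite)
    (hA : A ⊆ (Zring β : Set ℂ))
    (hone : FinRep β A 1)
    (hclosed : ∀ x y : ℂ, FinRep β A x → FinRep β A y → FinRep β A (x + y)) :
    IsAlgebraic ℚ β := by
  by_contra hβ
  obtain ⟨B, hB⟩ := FinRep.exists_natCast_bound
    (Transcendental.restrictScalars (algebraMap ℤ ℚ).injective_int hβ) hAfin hA
  have := hB (B + 1) (by exact_mod_cast FinRep.natCast_add_one hone hclosed B)
  omega

theorem stmt1 (β : ℂ) (hβ : 1 < ‖β‖) (A : Set ℂ) (hAfin : A.Finite)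
    (h0 : (0 : ℂ) ∈ A) (hA : A ⊆ (Zring β : Set ℂ))
    (hone : FinRep β A 1)
    (hclosed : ∀ x y : ℂ, FinRep β A x → FinRep β A y → FinRep β A (x + y)) :
    IsAlgebraic ℚ β :=
  stmt1_general β A hAfin hA hone hclosed
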